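/- Let ρ, κ > 0 and define θ_{ρ,κ}: ℝ^m → ℝ by θ_{ρ,κ}(p) = f_ρ*(A*p) + g*(−p) + (κ/2)‖p‖², where f_ρ*(A*p) = sup_{x ∈ H} { ⟨A*p,x⟩ − f(x) − (ρ/2)‖x‖² }. Then θ_{ρ,κ} is κ-strongly convex, has a unique minimizer over ℝ^m, is differentiable with gradient ∇θ_{ρ,κ}(p) = A x_{f,p} − x_{g,p} + κ p (where x_{f,p} is the unique maximizer of x ↦ ⟨A*p,x⟩ − f(x) − (ρ/2)‖x‖² and x_{g,p} is the unique minimizer of x ↦ ⟨p,x⟩ + g(x)), and ∇θ_{ρ,κ} is Lipschitz continuous with Lipschitz constant ‖A‖²/ρ + 1/μ + κ. -/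

import Mathlib

/-!
Put `k = f + (ρ/2)‖·‖²`, so that `θ(p) = k*(A*p) + g*(-p) + (κ/2)‖p‖²` where `k` and `g` are
strongly convex and lower semicontinuous. For such a σ-strongly convex `k` the supremum defining
`k*(a)` is attained at some `x_a` (maximizing sequences are Cauchy by strong convexity, and lower
semicontinuity passes to the limit), the objective `⟪a, ·⟫ - k` falls off quadratically away from
`x_a`, and comparing the two quadratic bounds at `x_a` and `x_b` gives `σ‖x_a - x_b‖ ≤ ‖a - b‖`.
Fenchel–Young at `x_a` is the subgradient inequality `k*(a) + ⟪b - a, x_a⟫ ≤ k*(b)`, so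
`G(p) = A x_{f,p} - x_{g,p} + κ p` is a κ-strong subgradient of `θ` at every `p`. This gives strong
convexity, coercivity (hence a minimizer on `ℝ^m`, unique by strict convexity) and, together with
the Lipschitz bound on `G`, differentiability with `∇θ = G`.
-/

open scoped RealInnerProductSpace
open Filter Topology Set

namespace EReal

lemma coe_sub_sub_coe (r s : ℝ) (z : EReal) : (r : EReal) - z - s = r - (z + s) := by
  induction z using EReal.rec <;> simp [← EReal.coe_sub, ← EReal.coe_add]
  ring

lemma eq_coe_sub_of_coe_sub_eq {r c : ℝ} {z : EReal} (h : (r : EReal) - z = c) :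
    z = ((r - c : ℝ) : EReal) := by
  induction z using EReal.rec <;> simp [← EReal.coe_sub] at h ⊢
  linarith

lemma coe_sub_le_of_coe_sub_le {r c : ℝ} {z : EReal} (h : (r : EReal) - z ≤ c) :
    ((r - c : ℝ) : EReal) ≤ z := by
  induction z using EReal.rec <;> simp [← EReal.coe_sub] at h ⊢
  linarith

lemma coe_neg_sub_le_of_coe_add_le {r r' : ℝ} {z z' : EReal} (h : (r : EReal) + z ≤ r' + z') :
    ((-r' : ℝ) : EReal) - z' ≤ ((-r : ℝ) : EReal) - z := by
  rwa [coe_neg, coe_neg, ← EReal.neg_add (by simp) (by simp), ← EReal.neg_add (by simp) (by simp),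
    EReal.neg_le_neg_iff]

lemma exists_coe_of_coe_eq_add_add {t s : ℝ} {X Y : EReal} (h : (t : EReal) = X + Y + s) :
    ∃ x y : ℝ, X = x ∧ Y = y ∧ t = x + y + s := by
  induction X using EReal.rec <;> induction Y using EReal.rec <;> simp [← EReal.coe_add] at h ⊢
  exact h

end EReal

theorem LowerSemicontinuous.le_of_tendsto {α β ι : Type*} [TopologicalSpace α] [LinearOrder β]
    [DenselyOrdered β] [TopologicalSpace β] [OrderTopology β] {f : α → β}
    (hf : LowerSemicontinuous f) {l : Filter ι} [l.NeBot] {u : ι → α} {x : α} {v : ι → β} {L : β}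
    (hu : Tendsto u l (𝓝 x)) (hv : Tendsto v l (𝓝 L)) (hle : ∀ᶠ i in l, f (u i) ≤ v i) :
    f x ≤ L := by
  by_contra! h
  obtain ⟨s, hLs, hsf⟩ := exists_between h
  obtain ⟨i, hfi, hvi, hi⟩ :=
    ((hu.eventually (hf x s hsf)).and ((hv.eventually (gt_mem_nhds hLs)).and hle)).exists
  exact (hfi.trans_le hi).not_gt hvi

theorem LowerSemicontinuous.add_coe_continuous {α : Type*} [TopologicalSpace α] {f : α → EReal}
    (hf : LowerSemicontinuous f) {c : α → ℝ} (hc : Continuous c) :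
    LowerSemicontinuous fun x => f x + (c x : EReal) :=
  hf.add' (continuous_coe_real_ereal.comp hc).lowerSemicontinuous fun _ =>
    EReal.continuousAt_add (.inr (EReal.coe_ne_bot _)) (.inr (EReal.coe_ne_top _))

lemma norm_smul_add_smul_sq {E : Type*} [NormedAddCommGroup E] [InnerProductSpace ℝ E]
    {t u : ℝ} (htu : t + u = 1) (x y : E) :
    ‖t • x + u • y‖ ^ 2 = t * ‖x‖ ^ 2 + u * ‖y‖ ^ 2 - t * u * ‖x - y‖ ^ 2 := by
  rw [norm_add_sq_real, norm_sub_sq_real, norm_smul, norm_smul, real_inner_smul_left,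
    real_inner_smul_right, mul_pow, mul_pow, Real.norm_eq_abs, Real.norm_eq_abs, sq_abs, sq_abs]
  obtain rfl := eq_sub_of_add_eq htu
  ring

/-- Convexity of an `EReal`-valued function; `ConvexOn` needs a module as codomain. -/
def ERealConvex {E : Type*} [AddCommGroup E] [Module ℝ E] (k : E → EReal) : Prop :=
  ∀ x y : E, ∀ a b : ℝ, 0 ≤ a → 0 ≤ b → a + b = 1 →
    k (a • x + b • y) ≤ (a : EReal) * k x + (b : EReal) * k y

section Conjugate

variable {E : Type*} [NormedAddCommGroup E] [InnerProductSpace ℝ E]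

noncomputable def fenchelConj (k : E → EReal) (a : E) : EReal :=
  ⨆ x, ((⟪a, x⟫ : ℝ) : EReal) - k x

/- Throughout, `x` attains the supremum defining `fenchelConj k a = c` exactly when
`k x = ⟪a, x⟫ - c` (the equality case of Fenchel–Young). -/
variable {k : E → EReal} {σ c d r s ε δ : ℝ} {a b x y : E}

lemma coe_inner_sub_le_fenchelConj (k : E → EReal) (a x : E) :
    ((⟪a, x⟫ : ℝ) : EReal) - k x ≤ fenchelConj k a :=
  le_iSup (fun y => ((⟪a, y⟫ : ℝ) : EReal) - k y) x

lemma inner_sub_le_of_fenchelConj_le (hc : fenchelConj k a ≤ c) (hx : k x ≤ r) :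
    ⟪a, x⟫ - r ≤ c := by
  have : ((⟪a, x⟫ - r : ℝ) : EReal) ≤ c :=
    calc ((⟪a, x⟫ - r : ℝ) : EReal) = ⟪a, x⟫ - (r : EReal) := EReal.coe_sub _ _
      _ ≤ ⟪a, x⟫ - k x := EReal.sub_le_sub le_rfl hx
      _ ≤ fenchelConj k a := coe_inner_sub_le_fenchelConj k a x
      _ ≤ c := hc
  exact_mod_cast this

lemma add_inner_sub_le_of_fenchelConj_le (hx : k x = ((⟪a, x⟫ - c : ℝ) : EReal))
    (hd : fenchelConj k b ≤ d) : c + ⟪b - a, x⟫ ≤ d := by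
  have := inner_sub_le_of_fenchelConj_le hd hx.le
  rw [inner_sub_left]
  linarith

lemma attains_of_forall_le (hc : fenchelConj k a = c)
    (hx : ∀ y, ((⟪a, y⟫ : ℝ) : EReal) - k y ≤ ((⟪a, x⟫ : ℝ) : EReal) - k x) :
    k x = ((⟪a, x⟫ - c : ℝ) : EReal) :=
  EReal.eq_coe_sub_of_coe_sub_eq <|
    hc ▸ le_antisymm (coe_inner_sub_le_fenchelConj k a x) (iSup_le hx)

lemma attains_of_forall_add_le (hc : fenchelConj k (-a) = c)
    (hx : ∀ y, ((⟪a, x⟫ : ℝ) : EReal) + k x ≤ ((⟪a, y⟫ : ℝ) : EReal) + k y) :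
    k x = ((⟪-a, x⟫ - c : ℝ) : EReal) :=
  attains_of_forall_le hc fun y => by
    simpa only [inner_neg_left] using EReal.coe_neg_sub_le_of_coe_add_le (hx y)

lemma attains_add_sq_of_forall_le {f : E → EReal}
    (hc : fenchelConj (fun x => f x + ((σ / 2 * ‖x‖ ^ 2 : ℝ) : EReal)) a = c)
    (hx : ∀ y, ((⟪a, y⟫ : ℝ) : EReal) - f y - ((σ / 2 * ‖y‖ ^ 2 : ℝ) : EReal) ≤
      ((⟪a, x⟫ : ℝ) : EReal) - f x - ((σ / 2 * ‖x‖ ^ 2 : ℝ) : EReal)) :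
    f x + ((σ / 2 * ‖x‖ ^ 2 : ℝ) : EReal) = ((⟪a, x⟫ - c : ℝ) : EReal) :=
  attains_of_forall_le hc (by simpa only [EReal.coe_sub_sub_coe] using hx)

lemma ERealConvex.apply_smul_add_smul_le_of_sub_sq
    (hk : ERealConvex fun x => k x - ((σ / 2 * ‖x‖ ^ 2 : ℝ) : EReal))
    (hx : k x = r) (hy : k y = s) {t u : ℝ} (ht : 0 ≤ t) (hu : 0 ≤ u) (htu : t + u = 1) :
    k (t • x + u • y) ≤ ((t * r + u * s - σ / 2 * (t * u * ‖x - y‖ ^ 2) : ℝ) : EReal) := by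
  have h := hk x y t u ht hu htu
  simp only [hx, hy] at h
  rw [← EReal.coe_sub, ← EReal.coe_sub, ← EReal.coe_mul, ← EReal.coe_mul, ← EReal.coe_add,
    EReal.sub_le_iff_le_add (.inl (EReal.coe_ne_bot _)) (.inl (EReal.coe_ne_top _)),
    ← EReal.coe_add] at h
  refine h.trans_eq (congrArg _ ?_)
  rw [norm_smul_add_smul_sq htu]
  obtain rfl := eq_sub_of_add_eq htu
  ring

variable (hk : ERealConvex fun x => k x - ((σ / 2 * ‖x‖ ^ 2 : ℝ) : EReal))
include hk

lemma inner_sub_add_sq_le_of_attains (hc : fenchelConj k a ≤ c)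
    (hx : k x = ((⟪a, x⟫ - c : ℝ) : EReal)) (hy : k y = s) :
    ⟪a, y⟫ - s + σ / 2 * ‖y - x‖ ^ 2 ≤ c := by
  have key : ∀ t ∈ Ioc (0 : ℝ) 1, ⟪a, y⟫ - s + σ / 2 * (1 - t) * ‖y - x‖ ^ 2 ≤ c := by
    rintro t ⟨ht0, ht1⟩
    have h := inner_sub_le_of_fenchelConj_le hc
      (hk.apply_smul_add_smul_le_of_sub_sq hy hx ht0.le (sub_nonneg.2 ht1) (add_sub_cancel t 1))
    rw [inner_add_right, real_inner_smul_right, real_inner_smul_right] at h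
    have : t * (⟪a, y⟫ - s + σ / 2 * (1 - t) * ‖y - x‖ ^ 2) ≤ t * c := by linarith
    exact le_of_mul_le_mul_left this ht0
  have hlim : Tendsto (fun t : ℝ => ⟪a, y⟫ - s + σ / 2 * (1 - t) * ‖y - x‖ ^ 2) (𝓝[>] 0)
      (𝓝 (⟪a, y⟫ - s + σ / 2 * (1 - 0) * ‖y - x‖ ^ 2)) :=
    ((Continuous.tendsto (by fun_prop) 0).mono_left nhdsWithin_le_nhds)
  simpa using le_of_tendsto hlim (eventually_of_mem (Ioc_mem_nhdsGT one_pos) key)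

lemma norm_sub_le_of_attains (hca : fenchelConj k a ≤ c)
    (hcb : fenchelConj k b ≤ d) (hx : k x = ((⟪a, x⟫ - c : ℝ) : EReal))
    (hy : k y = ((⟪b, y⟫ - d : ℝ) : EReal)) : σ * ‖x - y‖ ≤ ‖a - b‖ := by
  have gx := inner_sub_add_sq_le_of_attains hk hca hx hy
  have gy := inner_sub_add_sq_le_of_attains hk hcb hy hx
  have hsq : σ * ‖x - y‖ * ‖x - y‖ ≤ ‖a - b‖ * ‖x - y‖ := by
    have := real_inner_le_norm (a - b) (x - y)
    rw [norm_sub_rev y x] at gx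
    simp only [inner_sub_left, inner_sub_right] at this
    nlinarith
  rcases (norm_nonneg (x - y)).eq_or_lt with h0 | hpos
  · rw [← h0, mul_zero]
    exact norm_nonneg _
  · exact le_of_mul_le_mul_right hsq hpos

lemma sq_norm_sub_le_of_near_attains (hc : fenchelConj k a ≤ c) (hx : k x = r) (hy : k y = s)
    (hεx : c - ε ≤ ⟪a, x⟫ - r) (hδy : c - δ ≤ ⟪a, y⟫ - s) :
    σ * ‖x - y‖ ^ 2 ≤ 4 * (ε + δ) := by
  have h := inner_sub_le_of_fenchelConj_le hc
    (hk.apply_smul_add_smul_le_of_sub_sq hx hy (by norm_num : (0 : ℝ) ≤ 1 / 2)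
      (by norm_num : (0 : ℝ) ≤ 1 / 2) (by norm_num))
  rw [inner_add_right, real_inner_smul_right, real_inner_smul_right] at h
  linarith

omit hk in
lemma exists_near_attains (hc : fenchelConj k a = c) (hε : 0 < ε) :
    ∃ x, ∃ r : ℝ, k x = r ∧ c - ε < ⟪a, x⟫ - r := by
  have : ((c - ε : ℝ) : EReal) < fenchelConj k a := by
    rw [hc]
    exact_mod_cast (by linarith : c - ε < c)
  obtain ⟨x, hx⟩ := lt_iSup_iff.1 this
  have hbot : k x ≠ ⊥ := fun h => by
    have := hc ▸ coe_inner_sub_le_fenchelConj k a x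
    simp [h] at this
  have htop : k x ≠ ⊤ := fun h => by simp [h] at hx
  refine ⟨x, (k x).toReal, (EReal.coe_toReal htop hbot).symm, ?_⟩
  rw [← EReal.coe_toReal htop hbot, ← EReal.coe_sub] at hx
  exact_mod_cast hx

theorem exists_attains [CompleteSpace E] (hσ : 0 < σ) (hlsc : LowerSemicontinuous k)
    (hc : fenchelConj k a = c) : ∃ x, k x = ((⟪a, x⟫ - c : ℝ) : EReal) := by
  set e : ℕ → ℝ := fun n => 1 / (n + 1)
  choose x r hxr hlt using fun n => exists_near_attains (k := k) hc
    (by positivity : 0 < σ / 8 * e n ^ 2)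
  have hdist : ∀ n m N, N ≤ n → N ≤ m → dist (x n) (x m) ≤ e N := by
    intro n m N hn hm
    have h := sq_norm_sub_le_of_near_attains hk hc.le (hxr n) (hxr m) (hlt n).le (hlt m).le
    have hen : e n ^ 2 ≤ e N ^ 2 := by gcongr; exact Nat.one_div_le_one_div hn
    have hem : e m ^ 2 ≤ e N ^ 2 := by gcongr; exact Nat.one_div_le_one_div hm
    have : ‖x n - x m‖ ^ 2 ≤ e N ^ 2 := le_of_mul_le_mul_left (by nlinarith) hσ
    rw [dist_eq_norm]
    exact (pow_le_pow_iff_left₀ (norm_nonneg _) (by positivity) two_ne_zero).1 this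
  obtain ⟨xb, hxb⟩ := cauchySeq_tendsto_of_complete
    (cauchySeq_of_le_tendsto_0 e hdist tendsto_one_div_add_atTop_nhds_zero_nat)
  refine ⟨xb, le_antisymm ?_ (EReal.coe_sub_le_of_coe_sub_le ?_)⟩
  · refine hlsc.le_of_tendsto hxb (v := fun n => ((⟪a, x n⟫ - c + σ / 8 * e n ^ 2 : ℝ) : EReal))
      (EReal.tendsto_coe.2 ?_) (Eventually.of_forall fun n => ?_)
    · have he : Tendsto e atTop (𝓝 0) := tendsto_one_div_add_atTop_nhds_zero_nat
      simpa using (((tendsto_const_nhds (x := a)).inner hxb).sub_const c).add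
        ((he.pow 2).const_mul (σ / 8))
    · rw [hxr n, EReal.coe_le_coe_iff]
      linarith [hlt n]
  · exact hc ▸ coe_inner_sub_le_fenchelConj k a xb

end Conjugate

section Subgradient

variable {F : Type*} [NormedAddCommGroup F] [InnerProductSpace ℝ F] {Θ : F → ℝ} {G : F → F}
  {κ : ℝ}

theorem strongConvexOn_univ_of_strong_subgradient
    (h : ∀ p q, Θ p + ⟪q - p, G p⟫ + κ / 2 * ‖q - p‖ ^ 2 ≤ Θ q) :
    StrongConvexOn univ κ Θ := by
  refine ⟨convex_univ, fun x _ y _ a b ha hb hab => ?_⟩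
  obtain rfl := eq_sub_of_add_eq hab
  set z := (1 - b) • x + b • y
  have hx : x - z = b • (x - y) := by
    simp only [z, sub_smul, one_smul, smul_sub]
    abel
  have hy : y - z = (1 - b) • (y - x) := by
    simp only [z, sub_smul, one_smul, smul_sub]
    abel
  have h1 := h z x
  have h2 := h z y
  rw [hx, norm_smul, real_inner_smul_left] at h1
  rw [hy, norm_smul, real_inner_smul_left, ← neg_sub x y, inner_neg_left, norm_neg] at h2
  simp only [Real.norm_eq_abs, mul_pow, sq_abs, smul_eq_mul] at h1 h2 ⊢
  nlinarith [mul_le_mul_of_nonneg_left h1 ha, mul_le_mul_of_nonneg_left h2 hb]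

theorem hasGradientAt_of_subgradient [CompleteSpace F] {p g : F} {L : ℝ}
    (hp : ∀ q, Θ p + ⟪q - p, g⟫ ≤ Θ q) (hG : ∀ q, Θ q + ⟪p - q, G q⟫ ≤ Θ p)
    (hlip : ∀ q, ‖G q - g‖ ≤ L * ‖q - p‖) : HasGradientAt Θ g p := by
  rw [hasGradientAt_iff_isLittleO]
  refine Asymptotics.IsBigO.trans_isLittleO (g := fun q => ‖q - p‖ ^ 2)
    (.of_bound L (Eventually.of_forall fun q => ?_))
    (Asymptotics.isLittleO_pow_sub_sub p one_lt_two)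
  -- `0 ≤ Θ q - Θ p - ⟪q - p, g⟫ ≤ ⟪q - p, G q - g⟫ ≤ L ‖q - p‖²`
  have hlow := hp q
  have hup := hG q
  have hinner := real_inner_le_norm (q - p) (G q - g)
  have hL : ‖q - p‖ * ‖G q - g‖ ≤ L * ‖q - p‖ ^ 2 := by
    calc ‖q - p‖ * ‖G q - g‖ ≤ ‖q - p‖ * (L * ‖q - p‖) := by gcongr; exact hlip q
      _ = L * ‖q - p‖ ^ 2 := by ring
  have hnonneg := mul_nonneg (norm_nonneg (q - p)) (norm_nonneg (G q - g))
  rw [← neg_sub q p, inner_neg_left] at hup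
  rw [inner_sub_right] at hinner
  rw [real_inner_comm, Real.norm_eq_abs, norm_pow, norm_norm, abs_le]
  constructor <;> linarith

theorem existsUnique_forall_le_of_strong_subgradient [ProperSpace F] (hκ : 0 < κ) (hΘ : Continuous Θ)
    (h : ∀ p q, Θ p + ⟪q - p, G p⟫ + κ / 2 * ‖q - p‖ ^ 2 ≤ Θ q) :
    ∃! p, ∀ q, Θ p ≤ Θ q := by
  have hcoercive : Tendsto Θ (cocompact F) atTop := by
    refine tendsto_atTop_mono (fun q => ?_) (tendsto_atTop_add_const_left _ (Θ 0)
      ((tendsto_id.atTop_mul_atTop₀ (tendsto_atTop_add_const_right _ (-‖G 0‖)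
        (tendsto_id.const_mul_atTop (by positivity : 0 < κ / 2)))).comp
        tendsto_norm_cocompact_atTop))
    have h0 := h 0 q
    have := neg_abs_le ⟪q, G 0⟫
    have := abs_real_inner_le_norm q (G 0)
    simp only [sub_zero, Function.comp, id] at h0 ⊢
    nlinarith
  obtain ⟨p, hp⟩ := hΘ.exists_forall_le hcoercive
  refine ⟨p, hp, fun q hq => ((strongConvexOn_univ_of_strong_subgradient h).strictConvexOn hκ).eq_of_isMinOn
    (isMinOn_univ_iff.2 hq) (isMinOn_univ_iff.2 hp) (mem_univ _) (mem_univ _)⟩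

end Subgradient

section DualObjective

open ContinuousLinearMap

variable {H F : Type*} [NormedAddCommGroup H] [InnerProductSpace ℝ H] [CompleteSpace H]
  [NormedAddCommGroup F] [InnerProductSpace ℝ F] [CompleteSpace F]
  {A : H →L[ℝ] F} {kf : H → EReal} {kg : F → EReal} {u v : F → ℝ} {ρ μ κ : ℝ}
  (hu : ∀ p, fenchelConj kf (adjoint A p) = u p) (hv : ∀ p, fenchelConj kg (-p) = v p)
include hu hv

lemma dualObjective_subgradient {p q : F} {xf : H} {xg : F}
    (hxf : kf xf = ((⟪adjoint A p, xf⟫ - u p : ℝ) : EReal))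
    (hxg : kg xg = ((⟪-p, xg⟫ - v p : ℝ) : EReal)) :
    u p + v p + κ / 2 * ‖p‖ ^ 2 + ⟪q - p, A xf - xg + κ • p⟫ + κ / 2 * ‖q - p‖ ^ 2 ≤
      u q + v q + κ / 2 * ‖q‖ ^ 2 := by
  have hf := add_inner_sub_le_of_fenchelConj_le hxf (hu q).le
  have hg := add_inner_sub_le_of_fenchelConj_le hxg (hv q).le
  rw [← map_sub, adjoint_inner_left] at hf
  rw [← neg_sub', inner_neg_left] at hg
  have hsq := norm_add_sq_real (q - p) p
  rw [sub_add_cancel] at hsq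
  simp only [inner_add_right, inner_sub_right, real_inner_smul_right]
  rw [hsq]
  linarith

variable (hρ : 0 < ρ) (hμ : 0 < μ) (hκ : 0 ≤ κ)
  (hkf : ERealConvex fun x => kf x - ((ρ / 2 * ‖x‖ ^ 2 : ℝ) : EReal))
  (hkg : ERealConvex fun x => kg x - ((μ / 2 * ‖x‖ ^ 2 : ℝ) : EReal))
include hρ hμ hκ hkf hkg

lemma dualGradient_lipschitz {p q : F} {xfp xfq : H} {xgp xgq : F}
    (hxfp : kf xfp = ((⟪adjoint A p, xfp⟫ - u p : ℝ) : EReal))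
    (hxfq : kf xfq = ((⟪adjoint A q, xfq⟫ - u q : ℝ) : EReal))
    (hxgp : kg xgp = ((⟪-p, xgp⟫ - v p : ℝ) : EReal))
    (hxgq : kg xgq = ((⟪-q, xgq⟫ - v q : ℝ) : EReal)) :
    ‖(A xfp - xgp + κ • p) - (A xfq - xgq + κ • q)‖ ≤ (‖A‖ ^ 2 / ρ + 1 / μ + κ) * ‖p - q‖ := by
  have hf : ‖xfp - xfq‖ ≤ ‖A‖ * ‖p - q‖ / ρ := by
    rw [le_div_iff₀' hρ]
    refine (norm_sub_le_of_attains hkf (hu p).le (hu q).le hxfp hxfq).trans ?_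
    rw [← map_sub, ← LinearIsometryEquiv.norm_map adjoint A]
    exact (adjoint A).le_opNorm _
  have hg : ‖xgp - xgq‖ ≤ 1 / μ * ‖p - q‖ := by
    rw [one_div_mul_eq_div, le_div_iff₀' hμ]
    refine (norm_sub_le_of_attains hkg (hv p).le (hv q).le hxgp hxgq).trans_eq ?_
    rw [neg_sub_neg, norm_sub_rev]
  calc ‖(A xfp - xgp + κ • p) - (A xfq - xgq + κ • q)‖
      = ‖A (xfp - xfq) - (xgp - xgq) + κ • (p - q)‖ := by
        rw [map_sub, smul_sub]
        congr 1
        abel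
    _ ≤ ‖A (xfp - xfq)‖ + ‖xgp - xgq‖ + ‖κ • (p - q)‖ :=
        (norm_add_le _ _).trans (by gcongr; exact norm_sub_le _ _)
    _ ≤ ‖A‖ * ‖xfp - xfq‖ + ‖xgp - xgq‖ + κ * ‖p - q‖ := by
        rw [norm_smul, Real.norm_of_nonneg hκ]
        gcongr
        exact A.le_opNorm _
    _ ≤ ‖A‖ * (‖A‖ * ‖p - q‖ / ρ) + 1 / μ * ‖p - q‖ + κ * ‖p - q‖ := by gcongr
    _ = (‖A‖ ^ 2 / ρ + 1 / μ + κ) * ‖p - q‖ := by ring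

lemma dualObjective_hasGradientAt (hkf_lsc : LowerSemicontinuous kf)
    (hkg_lsc : LowerSemicontinuous kg) {p : F} {xf : H} {xg : F}
    (hxf : kf xf = ((⟪adjoint A p, xf⟫ - u p : ℝ) : EReal))
    (hxg : kg xg = ((⟪-p, xg⟫ - v p : ℝ) : EReal)) :
    HasGradientAt (fun p => u p + v p + κ / 2 * ‖p‖ ^ 2) (A xf - xg + κ • p) p := by
  choose xfq hxfq using fun q => exists_attains hkf hρ hkf_lsc (hu q)
  choose xgq hxgq using fun q => exists_attains hkg hμ hkg_lsc (hv q)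
  exact hasGradientAt_of_subgradient (G := fun q => A (xfq q) - xgq q + κ • q)
    (fun q => (le_add_of_nonneg_right (by positivity)).trans
      (dualObjective_subgradient (q := q) hu hv hxf hxg))
    (fun q => (le_add_of_nonneg_right (by positivity)).trans
      (dualObjective_subgradient hu hv (hxfq q) (hxgq q)))
    (fun q => dualGradient_lipschitz hu hv hρ hμ hκ hkf hkg (hxfq q) hxf (hxgq q) hxg)

end DualObjective

theorem doubly_smoothed_dual_objective_properties_general
    {H : Type*} [NormedAddCommGroup H] [InnerProductSpace ℝ H] [CompleteSpace H]
    {m : ℕ} (μ : ℝ) (hμ : 0 < μ)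
    (f : H → EReal) (g : EuclideanSpace ℝ (Fin m) → EReal)
    (hf_convex : ∀ x y : H, ∀ a b : ℝ, 0 ≤ a → 0 ≤ b → a + b = 1 →
      f (a • x + b • y) ≤ (a : EReal) * f x + (b : EReal) * f y)
    (hf_lsc : LowerSemicontinuous f)
    (hg_lsc : LowerSemicontinuous g)
    (hg_strconv : ∀ x y : EuclideanSpace ℝ (Fin m), ∀ a b : ℝ, 0 ≤ a → 0 ≤ b → a + b = 1 →
      g (a • x + b • y) - ((μ / 2 * ‖a • x + b • y‖ ^ 2 : ℝ) : EReal) ≤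
        (a : EReal) * (g x - ((μ / 2 * ‖x‖ ^ 2 : ℝ) : EReal)) +
        (b : EReal) * (g y - ((μ / 2 * ‖y‖ ^ 2 : ℝ) : EReal)))
    (A : H →L[ℝ] EuclideanSpace ℝ (Fin m))
    (ρ κ : ℝ) (hρ : 0 < ρ) (hκ : 0 < κ)
    (Θ : EuclideanSpace ℝ (Fin m) → ℝ)
    (hΘ : ∀ p : EuclideanSpace ℝ (Fin m),
      (Θ p : EReal) =
        (⨆ x : H, ((⟪ContinuousLinearMap.adjoint A p, x⟫ : ℝ) : EReal) - f x -
          ((ρ / 2 * ‖x‖ ^ 2 : ℝ) : EReal)) +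
        (⨆ x : EuclideanSpace ℝ (Fin m), ((⟪-p, x⟫ : ℝ) : EReal) - g x) +
        ((κ / 2 * ‖p‖ ^ 2 : ℝ) : EReal)) :
    StrongConvexOn Set.univ κ Θ ∧
    (∃! p₀ : EuclideanSpace ℝ (Fin m), ∀ p, Θ p₀ ≤ Θ p) ∧
    (∀ (p : EuclideanSpace ℝ (Fin m)) (xf : H) (xg : EuclideanSpace ℝ (Fin m)),
      (∀ x : H, ((⟪ContinuousLinearMap.adjoint A p, x⟫ : ℝ) : EReal) - f x -
          ((ρ / 2 * ‖x‖ ^ 2 : ℝ) : EReal) ≤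
        ((⟪ContinuousLinearMap.adjoint A p, xf⟫ : ℝ) : EReal) - f xf -
          ((ρ / 2 * ‖xf‖ ^ 2 : ℝ) : EReal)) →
      (∀ x : EuclideanSpace ℝ (Fin m),
        ((⟪p, xg⟫ : ℝ) : EReal) + g xg ≤ ((⟪p, x⟫ : ℝ) : EReal) + g x) →
      HasGradientAt Θ (A xf - xg + κ • p) p) ∧
    (∀ (p q : EuclideanSpace ℝ (Fin m)) (xfp xfq : H)
        (xgp xgq : EuclideanSpace ℝ (Fin m)),
      (∀ x : H, ((⟪ContinuousLinearMap.adjoint A p, x⟫ : ℝ) : EReal) - f x -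
          ((ρ / 2 * ‖x‖ ^ 2 : ℝ) : EReal) ≤
        ((⟪ContinuousLinearMap.adjoint A p, xfp⟫ : ℝ) : EReal) - f xfp -
          ((ρ / 2 * ‖xfp‖ ^ 2 : ℝ) : EReal)) →
      (∀ x : H, ((⟪ContinuousLinearMap.adjoint A q, x⟫ : ℝ) : EReal) - f x -
          ((ρ / 2 * ‖x‖ ^ 2 : ℝ) : EReal) ≤
        ((⟪ContinuousLinearMap.adjoint A q, xfq⟫ : ℝ) : EReal) - f xfq -
          ((ρ / 2 * ‖xfq‖ ^ 2 : ℝ) : EReal)) →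
      (∀ x : EuclideanSpace ℝ (Fin m),
        ((⟪p, xgp⟫ : ℝ) : EReal) + g xgp ≤ ((⟪p, x⟫ : ℝ) : EReal) + g x) →
      (∀ x : EuclideanSpace ℝ (Fin m),
        ((⟪q, xgq⟫ : ℝ) : EReal) + g xgq ≤ ((⟪q, x⟫ : ℝ) : EReal) + g x) →
      ‖(A xfp - xgp + κ • p) - (A xfq - xgq + κ • q)‖ ≤
        (‖A‖ ^ 2 / ρ + 1 / μ + κ) * ‖p - q‖) := by
  set kf : H → EReal := fun x => f x + ((ρ / 2 * ‖x‖ ^ 2 : ℝ) : EReal)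
  have hkf : ERealConvex fun x => kf x - ((ρ / 2 * ‖x‖ ^ 2 : ℝ) : EReal) := by
    simp only [kf, EReal.add_sub_cancel_right]
    exact hf_convex
  have hkf_lsc : LowerSemicontinuous kf := hf_lsc.add_coe_continuous (by fun_prop)
  obtain ⟨u, v, hu, hv, rfl⟩ : ∃ u v : EuclideanSpace ℝ (Fin m) → ℝ,
      (∀ p, fenchelConj kf (ContinuousLinearMap.adjoint A p) = u p) ∧
      (∀ p, fenchelConj g (-p) = v p) ∧ Θ = fun p => u p + v p + κ / 2 * ‖p‖ ^ 2 := by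
    choose u v hu hv hΘuv using fun p =>
      EReal.exists_coe_of_coe_eq_add_add (by simpa only [EReal.coe_sub_sub_coe] using hΘ p)
    exact ⟨u, v, hu, hv, funext hΘuv⟩
  choose xf hxf using fun p => exists_attains hkf hρ hkf_lsc (hu p)
  choose xg hxg using fun p => exists_attains hg_strconv hμ hg_lsc (hv p)
  have hsub := fun p q => dualObjective_subgradient (κ := κ) (q := q) hu hv (hxf p) (hxg p)
  have hgrad := fun p (xf : H) xg => dualObjective_hasGradientAt (p := p) (xf := xf) (xg := xg)
    hu hv hρ hμ hκ.le hkf hg_strconv hkf_lsc hg_lsc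
  have hlip := fun p q (xfp xfq : H) xgp xgq => dualGradient_lipschitz (p := p) (q := q)
    (xfp := xfp) (xfq := xfq) (xgp := xgp) (xgq := xgq) hu hv hρ hμ hκ.le hkf hg_strconv
  refine ⟨strongConvexOn_univ_of_strong_subgradient hsub, existsUnique_forall_le_of_strong_subgradient hκ
      (continuous_iff_continuousAt.2 fun p => (hgrad p _ _ (hxf p) (hxg p)).continuousAt) hsub,
    fun p xf xg h1 h2 => hgrad p xf xg (attains_add_sq_of_forall_le (hu p) h1)
      (attains_of_forall_add_le (hv p) h2),
    fun p q xfp xfq xgp xgq h1 h2 h3 h4 => hlip p q xfp xfq xgp xgq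
      (attains_add_sq_of_forall_le (hu p) h1) (attains_add_sq_of_forall_le (hu q) h2)
      (attains_of_forall_add_le (hv p) h3) (attains_of_forall_add_le (hv q) h4)⟩

/-- Let `ρ, κ > 0` and define `θ_{ρ,κ}(p) = f_ρ*(A*p) + g*(−p) + (κ/2)‖p‖²`.
Then `θ_{ρ,κ}` is κ-strongly convex, has a unique minimizer over `ℝ^m`, is differentiable with
gradient `∇θ_{ρ,κ}(p) = A x_{f,p} − x_{g,p} + κ p` (where `x_{f,p}` is the unique maximizer of
`x ↦ ⟨A*p,x⟩ − f(x) − (ρ/2)‖x‖²` and `x_{g,p}` is the unique minimizer of `x ↦ ⟨p,x⟩ + g(x)`),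
and `∇θ_{ρ,κ}` is Lipschitz continuous with Lipschitz constant `‖A‖²/ρ + 1/μ + κ`. -/
theorem doubly_smoothed_dual_objective_properties
    {H : Type*} [NormedAddCommGroup H] [InnerProductSpace ℝ H] [CompleteSpace H]
    {m : ℕ} (μ : ℝ) (hμ : 0 < μ)
    (f : H → EReal) (g : EuclideanSpace ℝ (Fin m) → EReal)
    (hf_proper_top : ∃ x, f x ≠ ⊤) (hf_proper_bot : ∀ x, f x ≠ ⊥)
    (hf_convex : ∀ x y : H, ∀ a b : ℝ, 0 ≤ a → 0 ≤ b → a + b = 1 →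
      f (a • x + b • y) ≤ (a : EReal) * f x + (b : EReal) * f y)
    (hf_lsc : LowerSemicontinuous f)
    (hf_bdd : Bornology.IsBounded {x : H | f x < ⊤})
    (hg_proper_top : ∃ x, g x ≠ ⊤) (hg_proper_bot : ∀ x, g x ≠ ⊥)
    (hg_lsc : LowerSemicontinuous g)
    (hg_strconv : ∀ x y : EuclideanSpace ℝ (Fin m), ∀ a b : ℝ, 0 ≤ a → 0 ≤ b → a + b = 1 →
      g (a • x + b • y) - ((μ / 2 * ‖a • x + b • y‖ ^ 2 : ℝ) : EReal) ≤
        (a : EReal) * (g x - ((μ / 2 * ‖x‖ ^ 2 : ℝ) : EReal)) +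
        (b : EReal) * (g y - ((μ / 2 * ‖y‖ ^ 2 : ℝ) : EReal)))
    (A : H →L[ℝ] EuclideanSpace ℝ (Fin m))
    (ρ κ : ℝ) (hρ : 0 < ρ) (hκ : 0 < κ)
    (Θ : EuclideanSpace ℝ (Fin m) → ℝ)
    (hΘ : ∀ p : EuclideanSpace ℝ (Fin m),
      (Θ p : EReal) =
        (⨆ x : H, ((⟪ContinuousLinearMap.adjoint A p, x⟫ : ℝ) : EReal) - f x -
          ((ρ / 2 * ‖x‖ ^ 2 : ℝ) : EReal)) +
        (⨆ x : EuclideanSpace ℝ (Fin m), ((⟪-p, x⟫ : ℝ) : EReal) - g x) +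
        ((κ / 2 * ‖p‖ ^ 2 : ℝ) : EReal)) :
    StrongConvexOn Set.univ κ Θ ∧
    (∃! p₀ : EuclideanSpace ℝ (Fin m), ∀ p, Θ p₀ ≤ Θ p) ∧
    (∀ (p : EuclideanSpace ℝ (Fin m)) (xf : H) (xg : EuclideanSpace ℝ (Fin m)),
      (∀ x : H, ((⟪ContinuousLinearMap.adjoint A p, x⟫ : ℝ) : EReal) - f x -
          ((ρ / 2 * ‖x‖ ^ 2 : ℝ) : EReal) ≤
        ((⟪ContinuousLinearMap.adjoint A p, xf⟫ : ℝ) : EReal) - f xf -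
          ((ρ / 2 * ‖xf‖ ^ 2 : ℝ) : EReal)) →
      (∀ x : EuclideanSpace ℝ (Fin m),
        ((⟪p, xg⟫ : ℝ) : EReal) + g xg ≤ ((⟪p, x⟫ : ℝ) : EReal) + g x) →
      HasGradientAt Θ (A xf - xg + κ • p) p) ∧
    (∀ (p q : EuclideanSpace ℝ (Fin m)) (xfp xfq : H)
        (xgp xgq : EuclideanSpace ℝ (Fin m)),
      (∀ x : H, ((⟪ContinuousLinearMap.adjoint A p, x⟫ : ℝ) : EReal) - f x -
          ((ρ / 2 * ‖x‖ ^ 2 : ℝ) : EReal) ≤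
        ((⟪ContinuousLinearMap.adjoint A p, xfp⟫ : ℝ) : EReal) - f xfp -
          ((ρ / 2 * ‖xfp‖ ^ 2 : ℝ) : EReal)) →
      (∀ x : H, ((⟪ContinuousLinearMap.adjoint A q, x⟫ : ℝ) : EReal) - f x -
          ((ρ / 2 * ‖x‖ ^ 2 : ℝ) : EReal) ≤
        ((⟪ContinuousLinearMap.adjoint A q, xfq⟫ : ℝ) : EReal) - f xfq -
          ((ρ / 2 * ‖xfq‖ ^ 2 : ℝ) : EReal)) →
      (∀ x : EuclideanSpace ℝ (Fin m),
        ((⟪p, xgp⟫ : ℝ) : EReal) + g xgp ≤ ((⟪p, x⟫ : ℝ) : EReal) + g x) →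
      (∀ x : EuclideanSpace ℝ (Fin m),
        ((⟪q, xgq⟫ : ℝ) : EReal) + g xgq ≤ ((⟪q, x⟫ : ℝ) : EReal) + g x) →
      ‖(A xfp - xgp + κ • p) - (A xfq - xgq + κ • q)‖ ≤
        (‖A‖ ^ 2 / ρ + 1 / μ + κ) * ‖p - q‖) :=
  doubly_smoothed_dual_objective_properties_general μ hμ f g hf_convex hf_lsc hg_lsc hg_strconv A ρ
    κ hρ hκ Θ hΘ
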